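/- arXiv:1509.08105 — 4 statements merged into one kernel-verified Lean document; each statement's English description precedes it below -/
import Mathlib

section
/- If B is an M×L complex matrix with Kruskal rank at least 2N, then for any vector z ∈ ℂ^M the equation z = Bx has at most one solution x ∈ ℂ^L with at most N nonzero entries. -/
/-! Two `N`-sparse solutions differ by a kernel vector supported on at most `2N ≤ kr(B)` columns of `B`;
those columns are linearly independent, so the difference vanishes. -/

/-- The Kruskal rank of a matrix `B`: the maximal `k` such that every set of `k`
columns of `B` is linearly independent. -/
noncomputable def kruskalRank {M L : ℕ} (B : Matrix (Fin M) (Fin L) ℂ) : ℕ :=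
  sSup {k | k ≤ L ∧ ∀ s : Finset (Fin L), s.card = k →
    LinearIndependent ℂ (fun j : s => B.transpose (j : Fin L))}

open Function Matrix

theorem Matrix.eq_zero_of_mulVec_eq_zero_of_linearIndependent_cols {K m n : Type*} [Field K]
    [Fintype n] {B : Matrix m n K} {s : Finset n}
    (hs : LinearIndependent K (fun j : s => Bᵀ (j : n))) {x : n → K}
    (hx : ∀ j ∉ s, x j = 0) (hBx : B *ᵥ x = 0) : x = 0 := by
  have hsum : ∑ j : s, x j • Bᵀ j = 0 := by
    rw [Finset.sum_coe_sort s (fun j => x j • Bᵀ j),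
      Finset.sum_subset s.subset_univ fun j _ hj => by simp [hx j hj],
      ← vecMul_eq_sum, ← mulVec_transpose, transpose_transpose, hBx]
  funext j
  by_cases hj : j ∈ s
  · exact Fintype.linearIndependent_iff.mp hs (fun j => x j) hsum ⟨j, hj⟩
  · exact hx j hj

theorem ncard_support_sub_le {α G : Type*} [Finite α] [AddGroup G] (x y : α → G) :
    (support (x - y)).ncard ≤ (support x).ncard + (support y).ncard :=
  (Set.ncard_le_ncard (support_sub x y)).trans (Set.ncard_union_le _ _)

section KruskalRank

variable {M L : ℕ} (B : Matrix (Fin M) (Fin L) ℂ)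

theorem kruskalRank_le_and_linearIndependent :
    kruskalRank B ≤ L ∧ ∀ s : Finset (Fin L), s.card = kruskalRank B →
      LinearIndependent ℂ (fun j : s => Bᵀ (j : Fin L)) := by
  refine Nat.sSup_mem (s := {k | k ≤ L ∧ ∀ s : Finset (Fin L), s.card = k →
    LinearIndependent ℂ (fun j : s => Bᵀ (j : Fin L))})
    ⟨0, Nat.zero_le _, fun s hs => ?_⟩ ⟨L, fun k hk => hk.1⟩
  rw [Finset.card_eq_zero.mp hs]
  exact linearIndependent_empty_type

variable {B}

theorem linearIndependent_cols_of_card_le_kruskalRank {s : Finset (Fin L)}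
    (hs : s.card ≤ kruskalRank B) : LinearIndependent ℂ (fun j : s => Bᵀ (j : Fin L)) := by
  obtain ⟨hle, hli⟩ := kruskalRank_le_and_linearIndependent B
  obtain ⟨t, hst, ht⟩ := Finset.exists_superset_card_eq hs (by simpa using hle)
  exact (hli t ht).comp (fun j : s => (⟨j, hst j.2⟩ : t))
    fun _ _ h => Subtype.ext (congrArg (fun j : t => (j : Fin L)) h :)

theorem eq_zero_of_mulVec_eq_zero_of_ncard_support_le_kruskalRank {x : Fin L → ℂ}
    (hx : (support x).ncard ≤ kruskalRank B) (hBx : B *ᵥ x = 0) : x = 0 := by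
  set s := (Set.toFinite (support x)).toFinset
  have hs : s.card ≤ kruskalRank B := by rwa [← Set.ncard_eq_toFinset_card]
  refine eq_zero_of_mulVec_eq_zero_of_linearIndependent_cols
    (linearIndependent_cols_of_card_le_kruskalRank hs) (fun j hj => ?_) hBx
  simpa [s] using hj

end KruskalRank

/-- If `B` is an `M × L` complex matrix with Kruskal rank at least `2N`, then for any
`z ∈ ℂ^M` the equation `z = B x` has at most one `N`-sparse solution `x ∈ ℂ^L`. -/
theorem stmt0 (M L N : ℕ) (B : Matrix (Fin M) (Fin L) ℂ)
    (hkr : 2 * N ≤ kruskalRank B)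
    (z : Fin M → ℂ) (x₁ x₂ : Fin L → ℂ)
    (hs₁ : (Function.support x₁).ncard ≤ N)
    (hs₂ : (Function.support x₂).ncard ≤ N)
    (h₁ : B.mulVec x₁ = z) (h₂ : B.mulVec x₂ = z) :
    x₁ = x₂ := by
  have hsupp : (support (x₁ - x₂)).ncard ≤ kruskalRank B := by
    linarith [ncard_support_sub_le x₁ x₂]
  have hker : B *ᵥ (x₁ - x₂) = 0 := by rw [mulVec_sub, h₁, h₂, sub_self]
  exact sub_eq_zero.mp (eq_zero_of_mulVec_eq_zero_of_ncard_support_le_kruskalRank hsupp hker)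
end

section
/- Let a = √((1 − 1/√3)/2) and b = e^{i5π/4}·√((1 + 1/√3)/2), and let α[1] = (a,b), α[2] = (b,a), α[3] = (a,−b), α[4] = (−b,a) in ℂ². Then for any two vectors y, y' ∈ ℂ² with y ≠ 0, if |⟨y, α[k]⟩|² = |⟨y', α[k]⟩|² for all k = 1,…,4, then there exists θ ∈ ℝ with y' = e^{iθ} y. -/
open Complex

noncomputable def aConst : ℂ := (Real.sqrt ((1 - 1 / Real.sqrt 3) / 2) : ℝ)

noncomputable def bConst : ℂ :=
  Complex.exp (Complex.I * (5 * Real.pi / 4)) * (Real.sqrt ((1 + 1 / Real.sqrt 3) / 2) : ℝ)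

def inn2 (y v : Fin 2 → ℂ) : ℂ := y 0 * star (v 0) + y 1 * star (v 1)

noncomputable def alphaVec : Fin 4 → Fin 2 → ℂ :=
  ![![aConst, bConst], ![bConst, aConst], ![aConst, -bConst], ![-bConst, aConst]]

lemma phase_exists (z : ℂ) (h : ‖z‖ = 1) : ∃ θ : ℝ, z = Complex.exp (Complex.I * θ) := by
  refine ⟨Complex.arg z, ?_⟩
  rw [mul_comm]
  have := Complex.norm_mul_exp_arg_mul_I z
  rw [h] at this; simpa using this.symm

lemma abs_eq_of_normSq_eq {u v : ℂ} (h : Complex.normSq u = Complex.normSq v) :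
    ‖u‖ = ‖v‖ := by
  rw [Complex.norm_def, Complex.norm_def, h]

lemma recon (u1 u2 v1 v2 : ℂ) (h1 : Complex.normSq u1 = Complex.normSq v1)
    (h2 : Complex.normSq u2 = Complex.normSq v2)
    (h3 : u1 * star u2 = v1 * star v2) (hne : u1 ≠ 0 ∨ u2 ≠ 0) :
    ∃ c : ℂ, ‖c‖ = 1 ∧ v1 = c * u1 ∧ v2 = c * u2 := by
  by_cases hu1 : u1 = 0
  · have hu2 : u2 ≠ 0 := hne.resolve_left (by simp [hu1])
    have hv1 : v1 = 0 := by
      have : Complex.normSq v1 = 0 := by rw [← h1, hu1]; simp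
      simpa using this
    refine ⟨v2 / u2, ?_, by simp [hu1, hv1], ?_⟩
    · rw [norm_div, ← abs_eq_of_normSq_eq h2, div_self (norm_ne_zero_iff.mpr hu2)]
    · field_simp
  · have habs : ‖v1‖ = ‖u1‖ := (abs_eq_of_normSq_eq h1).symm
    have hu1' : ‖u1‖ ≠ 0 := by simpa [norm_ne_zero_iff] using hu1
    have h3' : star u1 * u2 = star v1 * v2 := by
      have := congrArg star h3
      simpa [star_mul', mul_comm] using this
    have hns : (Complex.normSq u1 : ℂ) = (Complex.normSq v1 : ℂ) := by exact_mod_cast h1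
    have hu : star u1 * u1 = (Complex.normSq u1 : ℂ) := by
      rw [Complex.star_def, mul_comm, Complex.mul_conj]
    have hv : star v1 * v1 = (Complex.normSq v1 : ℂ) := by
      rw [Complex.star_def, mul_comm, Complex.mul_conj]
    have e : star u1 * (u2 * v1 - u1 * v2) = 0 := by
      linear_combination v1 * h3' - v2 * hu + v2 * hv - v2 * hns
    have key : u2 * v1 = u1 * v2 := by
      rcases mul_eq_zero.mp e with h | h
      · exact absurd (by simpa using h) hu1
      · exact sub_eq_zero.mp h
    refine ⟨v1 / u1, ?_, by field_simp, ?_⟩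
    · rw [norm_div, habs]
      field_simp
    · field_simp
      linear_combination -key

set_option maxHeartbeats 1000000 in
/-- For any `y, y' ∈ ℂ²` with `y ≠ 0`: if `|⟨y, α[k]⟩|² = |⟨y', α[k]⟩|²` for all
`k = 1,…,4`, then `y' = e^{iθ} y` for some `θ ∈ ℝ`. -/
theorem stmt5 (y y' : Fin 2 → ℂ) (hy : y ≠ 0)
    (h : ∀ k : Fin 4,
      ‖inn2 y (alphaVec k)‖ ^ 2 = ‖inn2 y' (alphaVec k)‖ ^ 2) :
    ∃ θ : ℝ, y' = fun i => Complex.exp (Complex.I * θ) * y i := by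
  -- constants
  set d : ℝ := 1 / Real.sqrt 3 with hd_def
  have h3pos : (1:ℝ) < Real.sqrt 3 := by
    have : (1:ℝ) = Real.sqrt 1 := by simp
    rw [this]; exact Real.sqrt_lt_sqrt (by norm_num) (by norm_num)
  have hd0 : 0 < d := by positivity
  have hd1 : d < 1 := by
    rw [hd_def, div_lt_one (by positivity)]; exact h3pos
  set A : ℝ := Real.sqrt ((1 - d) / 2) with hA_def
  set B : ℝ := Real.sqrt ((1 + d) / 2) with hB_def
  have hA2 : A ^ 2 = (1 - d) / 2 := Real.sq_sqrt (by linarith)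
  have hB2 : B ^ 2 = (1 + d) / 2 := Real.sq_sqrt (by linarith)
  have hApos : 0 < A := Real.sqrt_pos.mpr (by linarith)
  have hBpos : 0 < B := Real.sqrt_pos.mpr (by linarith)
  set c : ℝ := -(Real.sqrt 2 / 2) * B with hc_def
  have hcneg : c < 0 := by
    have h2 : 0 < Real.sqrt 2 := Real.sqrt_pos.mpr (by norm_num)
    rw [hc_def]; nlinarith
  have hc2 : 2 * c ^ 2 = B ^ 2 := by
    have : Real.sqrt 2 ^ 2 = 2 := Real.sq_sqrt (by norm_num)
    rw [hc_def]; nlinarith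
  have ha : aConst = (A : ℂ) := rfl
  have hb : bConst = (c : ℂ) * (1 + Complex.I) := by
    unfold bConst
    have ht : (Complex.I * (5 * (Real.pi : ℂ) / 4)) = ((5 * Real.pi / 4 : ℝ) : ℂ) * Complex.I := by
      push_cast; ring
    rw [ht, Complex.exp_mul_I, ← Complex.ofReal_cos, ← Complex.ofReal_sin]
    have hco : Real.cos (5 * Real.pi / 4) = -(Real.sqrt 2 / 2) := by
      have e : (5:ℝ) * Real.pi / 4 = Real.pi + Real.pi / 4 := by ring
      rw [e, Real.cos_add, Real.cos_pi_div_four]; simp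
    have hsi : Real.sin (5 * Real.pi / 4) = -(Real.sqrt 2 / 2) := by
      have e : (5:ℝ) * Real.pi / 4 = Real.pi + Real.pi / 4 := by ring
      rw [e, Real.sin_add, Real.sin_pi_div_four]; simp
    rw [hco, hsi, hc_def, hB_def]; push_cast; ring
  -- extract real equations
  have e1 := h 0
  have e2 := h 1
  have e3 := h 2
  have e4 := h 3
  rw [show alphaVec 0 = ![aConst, bConst] from rfl] at e1
  rw [show alphaVec 1 = ![bConst, aConst] from rfl] at e2
  rw [show alphaVec 2 = ![aConst, -bConst] from rfl] at e3
  rw [show alphaVec 3 = ![-bConst, aConst] from rfl] at e4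
  simp only [inn2, Matrix.cons_val_zero, Matrix.cons_val_one, Matrix.head_cons,
    ha, hb, Complex.sq_norm, star_neg,
    Complex.star_def, map_mul, Complex.conj_ofReal, map_add, map_one, map_neg,
    Complex.conj_I] at e1 e2 e3 e4
  simp only [Complex.normSq_apply, Complex.add_re, Complex.add_im, Complex.mul_re,
    Complex.mul_im, Complex.sub_re, Complex.sub_im, Complex.neg_re, Complex.neg_im,
    Complex.ofReal_re, Complex.ofReal_im, Complex.I_re, Complex.I_im,
    Complex.one_re, Complex.one_im] at e1 e2 e3 e4
  have hc2' : 2 * c ^ 2 = (1 + d) / 2 := by rw [hc2, hB2]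
  have hAc : A * c ≠ 0 := ne_of_lt (mul_neg_of_pos_of_neg hApos hcneg)
  -- cross-term equations
  have m1 : A*c*(((y 0).re*(y 1).re + (y 0).im*(y 1).im) - ((y 0).im*(y 1).re - (y 0).re*(y 1).im))
      = A*c*(((y' 0).re*(y' 1).re + (y' 0).im*(y' 1).im) - ((y' 0).im*(y' 1).re - (y' 0).re*(y' 1).im)) := by
    linear_combination (e1 - e3)/4
  have m2 : A*c*(((y 0).re*(y 1).re + (y 0).im*(y 1).im) + ((y 0).im*(y 1).re - (y 0).re*(y 1).im))
      = A*c*(((y' 0).re*(y' 1).re + (y' 0).im*(y' 1).im) + ((y' 0).im*(y' 1).re - (y' 0).re*(y' 1).im)) := by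
    linear_combination (e2 - e4)/4
  have hPt : (y 0).re*(y 1).re + (y 0).im*(y 1).im = (y' 0).re*(y' 1).re + (y' 0).im*(y' 1).im := by
    have h0 : A*c*(2*((y 0).re*(y 1).re + (y 0).im*(y 1).im))
        = A*c*(2*((y' 0).re*(y' 1).re + (y' 0).im*(y' 1).im)) := by linear_combination m1 + m2
    have := mul_left_cancel₀ hAc h0
    linarith
  have hQt : (y 0).im*(y 1).re - (y 0).re*(y 1).im = (y' 0).im*(y' 1).re - (y' 0).re*(y' 1).im := by
    have h0 : A*c*(2*((y 0).im*(y 1).re - (y 0).re*(y 1).im))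
        = A*c*(2*((y' 0).im*(y' 1).re - (y' 0).re*(y' 1).im)) := by linear_combination m2 - m1
    have := mul_left_cancel₀ hAc h0
    linarith
  -- magnitude equations
  have n1 : A^2*((y 0).re^2+(y 0).im^2) + 2*c^2*((y 1).re^2+(y 1).im^2)
      = A^2*((y' 0).re^2+(y' 0).im^2) + 2*c^2*((y' 1).re^2+(y' 1).im^2) := by
    linear_combination (e1 + e3)/2
  have n2 : A^2*((y 1).re^2+(y 1).im^2) + 2*c^2*((y 0).re^2+(y 0).im^2)
      = A^2*((y' 1).re^2+(y' 1).im^2) + 2*c^2*((y' 0).re^2+(y' 0).im^2) := by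
    linear_combination (e2 + e4)/2
  rw [hA2, hc2'] at n1 n2
  have hdne : d ≠ 0 := ne_of_gt hd0
  have hdiff : d * ((((y 1).re^2+(y 1).im^2) - ((y' 1).re^2+(y' 1).im^2))
      - (((y 0).re^2+(y 0).im^2) - ((y' 0).re^2+(y' 0).im^2))) = 0 := by
    linear_combination n1 - n2
  have h12 : (((y 1).re^2+(y 1).im^2) - ((y' 1).re^2+(y' 1).im^2))
      = (((y 0).re^2+(y 0).im^2) - ((y' 0).re^2+(y' 0).im^2)) := by
    rcases mul_eq_zero.mp hdiff with h' | h'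
    · exact absurd h' hdne
    · linarith
  have hsum : (((y 0).re^2+(y 0).im^2) - ((y' 0).re^2+(y' 0).im^2))
      + (((y 1).re^2+(y 1).im^2) - ((y' 1).re^2+(y' 1).im^2)) = 0 := by
    linear_combination n1 + n2
  have hn1 : (y 0).re^2+(y 0).im^2 = (y' 0).re^2+(y' 0).im^2 := by linarith
  have hn2 : (y 1).re^2+(y 1).im^2 = (y' 1).re^2+(y' 1).im^2 := by linarith
  -- back to complex statements
  have hz0 : Complex.normSq (y 0) = Complex.normSq (y' 0) := by
    rw [Complex.normSq_apply, Complex.normSq_apply]; linear_combination hn1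
  have hz1 : Complex.normSq (y 1) = Complex.normSq (y' 1) := by
    rw [Complex.normSq_apply, Complex.normSq_apply]; linear_combination hn2
  have hcross : y 0 * star (y 1) = y' 0 * star (y' 1) := by
    apply Complex.ext
    · simp only [Complex.mul_re, Complex.star_def, Complex.conj_re, Complex.conj_im]
      linear_combination hPt
    · simp only [Complex.mul_im, Complex.star_def, Complex.conj_re, Complex.conj_im]
      linear_combination hQt
  have hne : y 0 ≠ 0 ∨ y 1 ≠ 0 := by
    by_contra hcon
    push_neg at hcon
    apply hy
    funext i
    fin_cases i
    · exact hcon.1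
    · exact hcon.2
  obtain ⟨cc, hcc, hv1, hv2⟩ := recon (y 0) (y 1) (y' 0) (y' 1) hz0 hz1 hcross hne
  obtain ⟨θ, hθ⟩ := phase_exists cc hcc
  refine ⟨θ, ?_⟩
  funext i
  fin_cases i
  · simpa [← hθ] using hv1
  · simpa [← hθ] using hv2
end

section
/- For any nonzero complex numbers z₀ and z₁, knowledge of |z₀|², |z₁|², and the four quantities |⟨(z₁,z₀), α[k]⟩|² for k = 1,…,4 (with α[k] as in the phase-propagation setup) determines the phase difference arg(z₁) − arg(z₀) uniquely: specifically, the product z₁·conj(z₀) is uniquely determined by these measurements. -/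
open Complex

/-! Expanding `|z₁ conj A + z₀ conj B|²` shows that, once `|z₀|` and `|z₁|` are known, the
measurement with `α = (A, B)` reveals `Re (z₁ conj z₀ · conj A · B)`. Since `a` is real and
nonzero, `α[1]` and `α[2]` give `Re (p b)` and `Re (p conj b)` for `p = a z₁ conj z₀`, and these
determine `p` because `b` is neither real nor purely imaginary. -/

open Real ComplexConjugate

lemma norm_mul_star_add_mul_star_sq (x y A B : ℂ) :
    ‖x * star A + y * star B‖ ^ 2
      = ‖x‖ ^ 2 * ‖A‖ ^ 2 + ‖y‖ ^ 2 * ‖B‖ ^ 2 + 2 * (x * star y * star A * B).re := by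
  rw [Complex.sq_norm, Complex.normSq_add, Complex.normSq_mul, Complex.normSq_mul]
  simp only [Complex.sq_norm, Complex.star_def, Complex.normSq_conj, map_mul,
    Complex.conj_conj]
  ring_nf

lemma re_mul_star_eq_of_norm_sq_eq {x y x' y' : ℂ} (A B : ℂ)
    (hx : ‖x‖ ^ 2 = ‖x'‖ ^ 2) (hy : ‖y‖ ^ 2 = ‖y'‖ ^ 2)
    (h : ‖x * star A + y * star B‖ ^ 2 = ‖x' * star A + y' * star B‖ ^ 2) :
    (x * star y * star A * B).re = (x' * star y' * star A * B).re := by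
  rw [norm_mul_star_add_mul_star_sq, norm_mul_star_add_mul_star_sq, hx, hy] at h
  linarith

lemma eq_of_re_mul_eq_of_re_mul_conj_eq {u v c : ℂ} (hre : c.re ≠ 0) (him : c.im ≠ 0)
    (h : (u * c).re = (v * c).re) (h' : (u * conj c).re = (v * conj c).re) : u = v := by
  simp only [Complex.mul_re, Complex.conj_re, Complex.conj_im] at h h'
  have hr : (u.re - v.re) * c.re = 0 := by linear_combination (h + h') / 2
  have hi : (u.im - v.im) * c.im = 0 := by linear_combination (h' - h) / 2
  exact Complex.ext (sub_eq_zero.1 ((mul_eq_zero.1 hr).resolve_right hre))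
    (sub_eq_zero.1 ((mul_eq_zero.1 hi).resolve_right him))

lemma one_div_sqrt_three_lt_one : 1 / √3 < 1 := by
  rw [div_lt_one (by positivity), Real.lt_sqrt zero_le_one]
  norm_num

lemma aConst_ne_zero : aConst ≠ 0 := by
  have : 0 < √((1 - 1 / √3) / 2) := Real.sqrt_pos.2 (by linarith [one_div_sqrt_three_lt_one])
  exact Complex.ofReal_ne_zero.2 this.ne'

lemma conj_aConst : conj aConst = aConst := Complex.conj_ofReal _

lemma bConst_eq : bConst = exp ((5 * π / 4 : ℝ) * I) * (√((1 + 1 / √3) / 2) : ℝ) := by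
  rw [bConst]
  push_cast
  ring_nf

lemma sqrt_bConst_modulus_pos : 0 < √((1 + 1 / √3) / 2) :=
  Real.sqrt_pos.2 (by positivity)

lemma cos_five_pi_div_four_ne_zero : Real.cos (5 * π / 4) ≠ 0 := by
  rw [show 5 * π / 4 = π / 4 + π by ring, Real.cos_add_pi, Real.cos_pi_div_four]
  exact neg_ne_zero.2 (by positivity)

lemma sin_five_pi_div_four_ne_zero : Real.sin (5 * π / 4) ≠ 0 := by
  rw [show 5 * π / 4 = π / 4 + π by ring, Real.sin_add_pi, Real.sin_pi_div_four]
  exact neg_ne_zero.2 (by positivity)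

lemma bConst_re_ne_zero : bConst.re ≠ 0 := by
  rw [bConst_eq, Complex.re_mul_ofReal, Complex.exp_ofReal_mul_I_re]
  exact mul_ne_zero cos_five_pi_div_four_ne_zero sqrt_bConst_modulus_pos.ne'

lemma bConst_im_ne_zero : bConst.im ≠ 0 := by
  rw [bConst_eq, Complex.im_mul_ofReal, Complex.exp_ofReal_mul_I_im]
  exact mul_ne_zero sin_five_pi_div_four_ne_zero sqrt_bConst_modulus_pos.ne'

theorem stmt6_general (z₀ z₁ w₀ w₁ : ℂ)
    (hm0 : ‖z₀‖ ^ 2 = ‖w₀‖ ^ 2)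
    (hm1 : ‖z₁‖ ^ 2 = ‖w₁‖ ^ 2)
    (h : ∀ k : Fin 4,
      ‖inn2 ![z₁, z₀] (alphaVec k)‖ ^ 2
        = ‖inn2 ![w₁, w₀] (alphaVec k)‖ ^ 2) :
    z₁ * (starRingEnd ℂ) z₀ = w₁ * (starRingEnd ℂ) w₀ := by
  have hab := re_mul_star_eq_of_norm_sq_eq aConst bConst hm1 hm0 (h 0)
  have hba := re_mul_star_eq_of_norm_sq_eq bConst aConst hm1 hm0 (h 1)
  simp only [Complex.star_def, conj_aConst] at hab hba
  refine mul_right_cancel₀ aConst_ne_zero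
    (eq_of_re_mul_eq_of_re_mul_conj_eq bConst_re_ne_zero bConst_im_ne_zero ?_ ?_)
  · simpa only [mul_right_comm _ aConst] using hab
  · simpa only [mul_right_comm _ aConst, mul_assoc] using hba

/-- For nonzero `z₀, z₁`, the quantities `|z₀|²`, `|z₁|²` and the four measurements
`|⟨(z₁,z₀), α[k]⟩|²` determine the product `z₁·conj(z₀)` (hence the phase difference
`arg z₁ − arg z₀`) uniquely. -/
theorem stmt6 (z₀ z₁ w₀ w₁ : ℂ)
    (hz₀ : z₀ ≠ 0) (hz₁ : z₁ ≠ 0) (hw₀ : w₀ ≠ 0) (hw₁ : w₁ ≠ 0)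
    (hm0 : ‖z₀‖ ^ 2 = ‖w₀‖ ^ 2)
    (hm1 : ‖z₁‖ ^ 2 = ‖w₁‖ ^ 2)
    (h : ∀ k : Fin 4,
      ‖inn2 ![z₁, z₀] (alphaVec k)‖ ^ 2
        = ‖inn2 ![w₁, w₀] (alphaVec k)‖ ^ 2) :
    z₁ * (starRingEnd ℂ) z₀ = w₁ * (starRingEnd ℂ) w₀ :=
  stmt6_general z₀ z₁ w₀ w₁ hm0 hm1 h
end

section
/- Let a, b ∈ ℂ be nonzero with |arg(b) − arg(a)| not a multiple of π/2 in the sense that Re(a·conj(b)) ≠ 0 and Im(a·conj(b)) ≠ 0. For z = (z₁, z₂) ∈ ℂ², the four measurements |a z₁ + b z₂|², |b z₁ + a z₂|², |a z₁ − b z₂|², |−b z₁ + a z₂|² determine both Re(z₁ conj(z₂)) and Im(z₁ conj(z₂)). -/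
open Complex

theorem key_aux (x y u v : ℂ)
    (hp : ‖x + y‖ ^ 2 = ‖u + v‖ ^ 2)
    (hm : ‖x - y‖ ^ 2 = ‖u - v‖ ^ 2) :
    (x * (starRingEnd ℂ) y).re = (u * (starRingEnd ℂ) v).re := by
  simp only [Complex.sq_norm, Complex.normSq_add, Complex.normSq_sub] at hp hm
  linarith

/-- Let `a, b ∈ ℂ` be nonzero with `Re(a·conj b) ≠ 0` and `Im(a·conj b) ≠ 0`. Then the
four measurements `|a z₁ + b z₂|²`, `|b z₁ + a z₂|²`, `|a z₁ − b z₂|²`, `|−b z₁ + a z₂|²`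
determine both `Re(z₁ conj z₂)` and `Im(z₁ conj z₂)`. -/
theorem stmt7 (a b : ℂ) (ha : a ≠ 0) (hb : b ≠ 0)
    (hre : (a * (starRingEnd ℂ) b).re ≠ 0) (him : (a * (starRingEnd ℂ) b).im ≠ 0)
    (z₁ z₂ w₁ w₂ : ℂ)
    (h1 : ‖a * z₁ + b * z₂‖ ^ 2 = ‖a * w₁ + b * w₂‖ ^ 2)
    (h2 : ‖b * z₁ + a * z₂‖ ^ 2 = ‖b * w₁ + a * w₂‖ ^ 2)
    (h3 : ‖a * z₁ - b * z₂‖ ^ 2 = ‖a * w₁ - b * w₂‖ ^ 2)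
    (h4 : ‖-(b * z₁) + a * z₂‖ ^ 2 = ‖-(b * w₁) + a * w₂‖ ^ 2) :
    (z₁ * (starRingEnd ℂ) z₂).re = (w₁ * (starRingEnd ℂ) w₂).re ∧
    (z₁ * (starRingEnd ℂ) z₂).im = (w₁ * (starRingEnd ℂ) w₂).im := by
  set c := a * (starRingEnd ℂ) b with hc
  set p := z₁ * (starRingEnd ℂ) z₂ with hpdef
  set q := w₁ * (starRingEnd ℂ) w₂ with hqdef
  have e1 := key_aux (a * z₁) (b * z₂) (a * w₁) (b * w₂) h1 h3
  have h2' : ‖a * z₂ + b * z₁‖ ^ 2 = ‖a * w₂ + b * w₁‖ ^ 2 := by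
    rw [show a * z₂ + b * z₁ = b * z₁ + a * z₂ by ring,
        show a * w₂ + b * w₁ = b * w₁ + a * w₂ by ring]; exact h2
  have h4' : ‖a * z₂ - b * z₁‖ ^ 2 = ‖a * w₂ - b * w₁‖ ^ 2 := by
    rw [show a * z₂ - b * z₁ = -(b * z₁) + a * z₂ by ring,
        show a * w₂ - b * w₁ = -(b * w₁) + a * w₂ by ring]; exact h4
  have e2 := key_aux (a * z₂) (b * z₁) (a * w₂) (b * w₁) h2' h4'
  have e1' : (c * p).re = (c * q).re := by
    rw [show c * p = (a * z₁) * (starRingEnd ℂ) (b * z₂) by rw [hc, hpdef, map_mul]; ring,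
        show c * q = (a * w₁) * (starRingEnd ℂ) (b * w₂) by rw [hc, hqdef, map_mul]; ring]
    exact e1
  have e2' : (c * (starRingEnd ℂ) p).re = (c * (starRingEnd ℂ) q).re := by
    rw [show c * (starRingEnd ℂ) p = (a * z₂) * (starRingEnd ℂ) (b * z₁) by
          rw [hc, hpdef, map_mul, map_mul, Complex.conj_conj]; ring,
        show c * (starRingEnd ℂ) q = (a * w₂) * (starRingEnd ℂ) (b * w₁) by
          rw [hc, hqdef, map_mul, map_mul, Complex.conj_conj]; ring]
    exact e2
  simp only [Complex.mul_re, Complex.conj_re, Complex.conj_im] at e1' e2'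
  constructor
  · have h : c.re * (p.re - q.re) = 0 := by linarith
    rcases mul_eq_zero.mp h with h | h
    · exact absurd h hre
    · linarith
  · have h : c.im * (p.im - q.im) = 0 := by linarith
    rcases mul_eq_zero.mp h with h | h
    · exact absurd h him
    · linarith
end
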